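/- (Weighted L¹ tail estimate, from the proof of Theorem 5.1) There is a universal constant C > 0 with the following property. Let 0 ≤ α < 1, let R ≥ 1, and let f : ℝ² → ℝ be measurable with M := sup_{r ≥ R} ( r^{-(2+2α)} ∫_{B(0,r)} |f|² )^{1/2} < ∞. Then ∫_{|y| ≥ R} |f(y)| (1 + |y|²)^{-3/2} dy ≤ (C/(1 − α)) R^{α−1} M. -/

import Mathlib

/-! Bound the weight by `‖y‖⁻³` and write `‖y‖⁻³ = ∫_{‖y‖}^∞ 3 r⁻⁴ dr`; exchanging the integrals
bounds the tail integral by `∫_R^∞ 3 r⁻⁴ (∫_{B(0,r)} |f|) dr`. By Cauchy–Schwarz and the definition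
of `M`, `∫_{B(0,r)} |f| ≤ |B(0,1)|^{1/2} M r^{2+α}` for `r ≥ R`, and
`∫_R^∞ r^{α-2} dr = R^{α-1}/(1-α)`. -/

open MeasureTheory Metric ENNReal

noncomputable section

/-- The plane `ℝ²` as a Euclidean space. -/
abbrev E2 := EuclideanSpace ℝ (Fin 2)

/-- Truncated local Morrey `L²` norm
`sup_{r ≥ R} ( r^{-(d+2α)} ∫_{B(0,r)} |f|² )^{1/2}`, valued in `ℝ≥0∞`. -/
def morreyR {d : ℕ} {F : Type*} [NormedAddCommGroup F] (α R : ℝ)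
    (f : EuclideanSpace ℝ (Fin d) → F) : ℝ≥0∞ :=
  ⨆ r : {r : ℝ // R ≤ r},
    ((∫⁻ x in ball (0 : EuclideanSpace ℝ (Fin d)) (r : ℝ), (‖f x‖₊ : ℝ≥0∞) ^ 2) /
      ENNReal.ofReal ((r : ℝ) ^ ((d : ℝ) + 2 * α))) ^ ((1 : ℝ) / 2)

open Set

lemma lintegral_Ioi_rpow_of_lt {s c : ℝ} (hs : s < -1) (hc : 0 < c) :
    ∫⁻ t in Ioi c, ENNReal.ofReal (t ^ s) = ENNReal.ofReal (c ^ (s + 1) / -(s + 1)) := by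
  rw [← ofReal_integral_eq_lintegral_ofReal (integrableOn_Ioi_rpow_of_lt hs hc)
    (ae_restrict_of_forall_mem measurableSet_Ioi fun t ht => Real.rpow_nonneg (hc.trans ht).le _),
    integral_Ioi_rpow_of_lt hs hc, div_neg, neg_div]

lemma ofReal_rpow_neg_eq_lintegral_Ioi {p t : ℝ} (hp : 0 < p) (ht : 0 < t) :
    ENNReal.ofReal (t ^ (-p)) =
      ENNReal.ofReal p * ∫⁻ r in Ioi t, ENNReal.ofReal (r ^ (-p - 1)) := by
  rw [lintegral_Ioi_rpow_of_lt (by linarith) ht, ← ENNReal.ofReal_mul hp.le]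
  congr 1
  rw [sub_add_cancel, neg_neg, mul_div_cancel₀ _ hp.ne']

lemma setLIntegral_norm_ge_mul_rpow_neg_le {E : Type*} [NormedAddCommGroup E] [MeasurableSpace E]
    [OpensMeasurableSpace E] {μ : Measure E} [SFinite μ] {g : E → ℝ≥0∞} (hg : Measurable g)
    {p R : ℝ} (hp : 0 < p) (hR : 0 < R) :
    ∫⁻ y in {y | R ≤ ‖y‖}, g y * ENNReal.ofReal (‖y‖ ^ (-p)) ∂μ ≤
      ENNReal.ofReal p *
        ∫⁻ r in Ioi R, ENNReal.ofReal (r ^ (-p - 1)) * ∫⁻ y in ball 0 r, g y ∂μ := by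
  let H : E → ℝ → ℝ≥0∞ := fun y r => if ‖y‖ < r then g y * ENNReal.ofReal (r ^ (-p - 1)) else 0
  have hH : Measurable (Function.uncurry H) := by
    refine Measurable.ite (measurableSet_lt measurable_fst.norm measurable_snd) ?_ measurable_const
    exact (hg.comp measurable_fst).mul (by fun_prop)
  have h_layer : ∀ y ∈ {y : E | R ≤ ‖y‖},
      g y * ENNReal.ofReal (‖y‖ ^ (-p)) = ENNReal.ofReal p * ∫⁻ r in Ioi R, H y r := by
    intro y (hy : R ≤ ‖y‖)
    have hH_y : ∀ r, H y r = (Ioi ‖y‖).indicator (fun r => g y * ENNReal.ofReal (r ^ (-p - 1))) r :=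
      fun r => by simp only [H, indicator, mem_Ioi]
    simp_rw [hH_y, lintegral_indicator measurableSet_Ioi,
      Measure.restrict_restrict measurableSet_Ioi, Ioi_inter_Ioi, sup_eq_left.mpr hy,
      lintegral_const_mul _ (by fun_prop : Measurable fun r : ℝ => ENNReal.ofReal (r ^ (-p - 1))),
      ofReal_rpow_neg_eq_lintegral_Ioi hp (hR.trans_le hy)]
    ring
  have h_slice : ∀ r,
      ∫⁻ y, H y r ∂μ = ENNReal.ofReal (r ^ (-p - 1)) * ∫⁻ y in ball 0 r, g y ∂μ := by
    intro r
    have hH_r : ∀ y,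
        H y r = (ball 0 r).indicator (fun y => g y * ENNReal.ofReal (r ^ (-p - 1))) y :=
      fun y => by simp only [H, indicator, mem_ball_zero_iff]
    simp_rw [hH_r, lintegral_indicator measurableSet_ball, lintegral_mul_const _ hg, mul_comm]
  calc ∫⁻ y in {y | R ≤ ‖y‖}, g y * ENNReal.ofReal (‖y‖ ^ (-p)) ∂μ
      = ∫⁻ y in {y | R ≤ ‖y‖}, ENNReal.ofReal p * (∫⁻ r in Ioi R, H y r) ∂μ :=
        setLIntegral_congr_fun (measurableSet_le measurable_const measurable_norm) h_layer
    _ ≤ ∫⁻ y, ENNReal.ofReal p * (∫⁻ r in Ioi R, H y r) ∂μ := setLIntegral_le_lintegral _ _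
    _ = ENNReal.ofReal p * ∫⁻ r in Ioi R, ∫⁻ y, H y r ∂μ := by
        rw [lintegral_const_mul _ (by exact hH.lintegral_prod_right'),
          lintegral_lintegral_swap hH.aemeasurable]
    _ = _ := by simp_rw [h_slice]

lemma lintegral_le_lintegral_sq_rpow_half_mul {X : Type*} [MeasurableSpace X] (μ : Measure X)
    {g : X → ℝ≥0∞} (hg : AEMeasurable g μ) :
    ∫⁻ x, g x ∂μ ≤ (∫⁻ x, g x ^ 2 ∂μ) ^ (1 / 2 : ℝ) * μ univ ^ (1 / 2 : ℝ) := by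
  simpa using
    lintegral_mul_le_Lp_mul_Lq μ Real.HolderConjugate.two_two hg aemeasurable_const (g := 1)

section Morrey

variable {d : ℕ} {F : Type*} [NormedAddCommGroup F] {α R r : ℝ} {f : EuclideanSpace ℝ (Fin d) → F}

lemma lintegral_sq_ball_rpow_half_le_morreyR (hr0 : 0 < r) (hRr : R ≤ r) :
    (∫⁻ x in ball 0 r, ‖f x‖ₑ ^ 2) ^ (1 / 2 : ℝ) ≤
      morreyR α R f * ENNReal.ofReal (r ^ (d / 2 + α : ℝ)) := by
  set I := ∫⁻ x in ball 0 r, ‖f x‖ₑ ^ 2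
  set b := ENNReal.ofReal (r ^ ((d : ℝ) + 2 * α))
  have hb0 : b ≠ 0 := (ENNReal.ofReal_pos.mpr (Real.rpow_pos_of_pos hr0 _)).ne'
  have hb : b ^ (1 / 2 : ℝ) = ENNReal.ofReal (r ^ (d / 2 + α : ℝ)) := by
    rw [ENNReal.ofReal_rpow_of_nonneg (Real.rpow_nonneg hr0.le _) (by norm_num),
      ← Real.rpow_mul hr0.le]
    ring_nf
  have hI : I = I / b * b := (ENNReal.div_mul_cancel hb0 ofReal_ne_top).symm
  rw [← hb, hI, ENNReal.mul_rpow_of_nonneg _ _ (by norm_num)]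
  gcongr
  exact le_iSup_of_le (ι := {r : ℝ // R ≤ r}) ⟨r, hRr⟩ le_rfl

lemma volume_ball_rpow_half (hr0 : 0 < r) :
    volume (ball (0 : EuclideanSpace ℝ (Fin d)) r) ^ (1 / 2 : ℝ) =
      ENNReal.ofReal (r ^ (d / 2 : ℝ)) *
        volume (ball (0 : EuclideanSpace ℝ (Fin d)) 1) ^ (1 / 2 : ℝ) := by
  rw [Measure.addHaar_ball_of_pos _ _ hr0, finrank_euclideanSpace_fin,
    ENNReal.mul_rpow_of_nonneg _ _ (by norm_num),
    ENNReal.ofReal_rpow_of_nonneg (by positivity) (by norm_num), ← Real.rpow_natCast,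
    ← Real.rpow_mul hr0.le]
  ring_nf

lemma lintegral_ball_le_morreyR (hf : AEStronglyMeasurable f) (hr0 : 0 < r) (hRr : R ≤ r) :
    ∫⁻ x in ball 0 r, ‖f x‖ₑ ≤
      morreyR α R f * volume (ball (0 : EuclideanSpace ℝ (Fin d)) 1) ^ (1 / 2 : ℝ) *
        ENNReal.ofReal (r ^ (d + α)) := by
  have hpow : ENNReal.ofReal (r ^ (d / 2 + α : ℝ)) * ENNReal.ofReal (r ^ (d / 2 : ℝ)) =
      ENNReal.ofReal (r ^ (d + α)) := by
    rw [← ENNReal.ofReal_mul (by positivity), ← Real.rpow_add hr0]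
    ring_nf
  calc ∫⁻ x in ball 0 r, ‖f x‖ₑ
      ≤ (∫⁻ x in ball 0 r, ‖f x‖ₑ ^ 2) ^ (1 / 2 : ℝ) *
          volume (ball (0 : EuclideanSpace ℝ (Fin d)) r) ^ (1 / 2 : ℝ) := by
        simpa using lintegral_le_lintegral_sq_rpow_half_mul _ hf.enorm.restrict
    _ ≤ morreyR α R f * ENNReal.ofReal (r ^ (d / 2 + α : ℝ)) *
          (ENNReal.ofReal (r ^ (d / 2 : ℝ)) *
            volume (ball (0 : EuclideanSpace ℝ (Fin d)) 1) ^ (1 / 2 : ℝ)) := by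
        rw [volume_ball_rpow_half hr0]
        gcongr
        exact lintegral_sq_ball_rpow_half_le_morreyR hr0 hRr
    _ = _ := by
        rw [← hpow]
        ring

lemma setLIntegral_norm_ge_mul_rpow_neg_le_morreyR (hf : StronglyMeasurable f) {p : ℝ}
    (hR : 0 < R) (hp : 0 < p) (hαp : d + α < p) :
    ∫⁻ y in {y | R ≤ ‖y‖}, ‖f y‖ₑ * ENNReal.ofReal (‖y‖ ^ (-p)) ≤
      ENNReal.ofReal (p / (p - (d + α)) * R ^ (d + α - p)) *
        volume (ball (0 : EuclideanSpace ℝ (Fin d)) 1) ^ (1 / 2 : ℝ) * morreyR α R f := by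
  set K := volume (ball (0 : EuclideanSpace ℝ (Fin d)) 1) ^ (1 / 2 : ℝ)
  have hpow : ∀ r ∈ Ioi R, ENNReal.ofReal (r ^ (-p - 1)) * ENNReal.ofReal (r ^ (d + α)) =
      ENNReal.ofReal (r ^ (d + α - p - 1)) := fun r (hr : R < r) => by
    rw [← ENNReal.ofReal_mul (Real.rpow_nonneg (hR.trans hr).le _), ← Real.rpow_add (hR.trans hr)]
    ring_nf
  calc ∫⁻ y in {y | R ≤ ‖y‖}, ‖f y‖ₑ * ENNReal.ofReal (‖y‖ ^ (-p))
      ≤ ENNReal.ofReal p *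
          ∫⁻ r in Ioi R, ENNReal.ofReal (r ^ (-p - 1)) * ∫⁻ y in ball 0 r, ‖f y‖ₑ :=
        setLIntegral_norm_ge_mul_rpow_neg_le hf.enorm hp hR
    _ ≤ ENNReal.ofReal p * ∫⁻ r in Ioi R,
          ENNReal.ofReal (r ^ (-p - 1)) * (morreyR α R f * K * ENNReal.ofReal (r ^ (d + α))) := by
        refine mul_le_mul_right (setLIntegral_mono' measurableSet_Ioi fun r (hr : R < r) => ?_) _
        gcongr
        exact lintegral_ball_le_morreyR hf.aestronglyMeasurable (hR.trans hr) hr.le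
    _ = ENNReal.ofReal p * (morreyR α R f * K) *
          ∫⁻ r in Ioi R, ENNReal.ofReal (r ^ (d + α - p - 1)) := by
        rw [mul_assoc, ← lintegral_const_mul (morreyR α R f * K) (by fun_prop)]
        congr 1
        refine setLIntegral_congr_fun measurableSet_Ioi fun r (hr : R < r) => ?_
        rw [← hpow r hr]
        ring
    _ = _ := by
        rw [lintegral_Ioi_rpow_of_lt (by linarith) hR, mul_comm (ENNReal.ofReal p), mul_assoc,
          ← ENNReal.ofReal_mul hp.le]
        ring_nf

end Morrey

lemma one_add_sq_rpow_neg_half_le {s t : ℝ} (hs : 0 ≤ s) (ht : 0 < t) :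
    (1 + t ^ 2) ^ (-s / 2) ≤ t ^ (-s) := by
  calc (1 + t ^ 2) ^ (-s / 2) ≤ (t ^ 2) ^ (-s / 2) :=
        Real.rpow_le_rpow_of_nonpos (by positivity) (by linarith) (by linarith)
    _ = t ^ (-s) := by
        rw [← Real.rpow_natCast, ← Real.rpow_mul ht.le]
        ring_nf

/-- Weighted `L¹` tail estimate (from the proof of Theorem 5.1):
`∫_{|y| ≥ R} |f(y)| ⟨y⟩^{-3} dy ≤ (C/(1−α)) R^{α−1} M` where `M` is the truncated
Morrey norm of `f` of growth `α` at radius `R ≥ 1`, and `0 ≤ α < 1`. -/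
theorem weighted_tail_estimate :
    ∃ C : ℝ, 0 < C ∧
      ∀ (α : ℝ), 0 ≤ α → α < 1 →
      ∀ R : ℝ, 1 ≤ R →
      ∀ f : E2 → ℝ, Measurable f →
        morreyR α R f < ⊤ →
        (∫⁻ y in {y : E2 | R ≤ ‖y‖},
            (‖f y‖₊ : ℝ≥0∞) * ENNReal.ofReal ((1 + ‖y‖ ^ 2) ^ (-(3 : ℝ) / 2))) ≤
          ENNReal.ofReal (C / (1 - α) * R ^ (α - 1)) * morreyR α R f := by
  set K := volume (ball (0 : E2) 1) ^ (1 / 2 : ℝ)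
  have hK : K ≠ ⊤ := ENNReal.rpow_ne_top_of_nonneg (by norm_num) measure_ball_lt_top.ne
  have hK_pos : 0 < K.toReal :=
    ENNReal.toReal_pos
      (ENNReal.rpow_pos (measure_ball_pos _ _ one_pos) measure_ball_lt_top.ne).ne' hK
  refine ⟨3 * K.toReal, by positivity, fun α _ hα R hR f hf _ => ?_⟩
  have hR0 : 0 < R := one_pos.trans_le hR
  calc ∫⁻ y in {y : E2 | R ≤ ‖y‖}, ‖f y‖ₑ * ENNReal.ofReal ((1 + ‖y‖ ^ 2) ^ (-(3 : ℝ) / 2))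
      ≤ ∫⁻ y in {y : E2 | R ≤ ‖y‖}, ‖f y‖ₑ * ENNReal.ofReal (‖y‖ ^ (-3 : ℝ)) := by
        refine setLIntegral_mono' (measurableSet_le measurable_const measurable_norm)
          fun y (hy : R ≤ ‖y‖) => ?_
        gcongr
        exact one_add_sq_rpow_neg_half_le (by norm_num) (hR0.trans_le hy)
    _ ≤ ENNReal.ofReal (3 / (3 - (2 + α)) * R ^ (2 + α - 3)) * K * morreyR α R f :=
        setLIntegral_norm_ge_mul_rpow_neg_le_morreyR hf.stronglyMeasurable hR0 (by norm_num)
          (by push_cast; linarith)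
    _ = ENNReal.ofReal (3 * K.toReal / (1 - α) * R ^ (α - 1)) * morreyR α R f := by
        conv_lhs => rw [← ENNReal.ofReal_toReal hK]
        rw [← ENNReal.ofReal_mul (mul_nonneg (div_nonneg (by norm_num) (by linarith))
          (Real.rpow_nonneg hR0.le _))]
        congr 2
        ring_nf

end
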